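/- arXiv:1610.02880 — 2 statements merged into one kernel-verified Lean document; each statement's English description precedes it below -/
import Mathlib

section
/- For any m ≥ 2, any m×m real matrix A with all entries nonzero, and any m-tuple of central points p, the generalized distance-squared mapping G_{(p,A)} : R^m → R^m is not injective. -/
/-- The generalized distance-squared mapping `G_{(p,A)} : ℝ^m → ℝ^m`. -/
noncomputable def gdsq {m : ℕ} (p : Fin m → Fin m → ℝ) (A : Matrix (Fin m) (Fin m) ℝ)
    (x : Fin m → ℝ) : Fin m → ℝ :=
  fun i => ∑ j, A i j * (x j - p i j) ^ 2

/-- For `m ≥ 2`, any generalized distance-squared mapping of the equidimensional case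
is not injective. -/
theorem stmt2 {m : ℕ} (hm : 2 ≤ m) (A : Matrix (Fin m) (Fin m) ℝ)
    (hA : ∀ i j, A i j ≠ 0) (p : Fin m → Fin m → ℝ) :
    ¬ Function.Injective (gdsq p A) := by
  intro hinj
  have hm0 : 0 < m := by omega
  set i0 : Fin m := ⟨0, hm0⟩ with hi0
  set M : Matrix (Fin m) (Fin m) ℝ := fun i j => A i j * (p i0 j - p i j) with hM
  have hdet : M.det = 0 := by
    apply Matrix.det_eq_zero_of_row_eq_zero i0
    intro j
    simp [hM]
  obtain ⟨u, hu, huM⟩ := (Matrix.exists_mulVec_eq_zero_iff).2 hdet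
  set x : Fin m → ℝ := fun j => p i0 j + u j / 2 with hx
  set y : Fin m → ℝ := fun j => p i0 j - u j / 2 with hy
  have hxy : x ≠ y := by
    intro h
    apply hu
    funext j
    have := congrFun h j
    simp only [hx, hy] at this
    show u j = (0 : ℝ)
    linarith
  apply hxy
  apply hinj
  funext i
  have hrow : ∑ j, A i j * (p i0 j - p i j) * u j = 0 := by
    have := congrFun huM i
    simpa [Matrix.mulVec, dotProduct, hM] using this
  show ∑ j, A i j * (x j - p i j) ^ 2 = ∑ j, A i j * (y j - p i j) ^ 2
  have key : ∑ j, (A i j * (x j - p i j) ^ 2 - A i j * (y j - p i j) ^ 2) = 0 := by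
    have : ∀ j, A i j * (x j - p i j) ^ 2 - A i j * (y j - p i j) ^ 2
        = 2 * (A i j * (p i0 j - p i j) * u j) := by
      intro j
      simp only [hx, hy]
      ring
    rw [Finset.sum_congr rfl (fun j _ => this j), ← Finset.mul_sum, hrow, mul_zero]
  have := Finset.sum_sub_distrib (s := Finset.univ)
    (f := fun j => A i j * (x j - p i j) ^ 2) (g := fun j => A i j * (y j - p i j) ^ 2)
  rw [this] at key
  linarith
end

section
/- Let f : N → R^m be smooth with N an n-manifold, and define Γ : N^{(2)} × (R^m)^m → R^{2m} by Γ(q,q',p) = (G_{(p,A)}(f(q)), G_{(p,A)}(f(q'))), where N^{(2)} = {(q,q') ∈ N² : q ≠ q'}. If f is injective and all entries of A are nonzero, then Γ is transverse to the diagonal Δ = {(y,y) : y ∈ R^m} ⊆ R^{2m}: in fact, for each fixed (q,q') with q ≠ q', the partial derivative of Γ in the p-variables already spans a complement of T Δ. -/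
open Manifold

/-!
Differentiating `G_{(p,A)}(y)_i = ∑ⱼ a_ij (y_j - p_ij)²` in `p` gives `v ↦ ∑ⱼ -2 a_ij (y_j - p_ij) v_ij`,
so the `p`-derivative of `(G(y), G(y'))` followed by `(u, u') ↦ u - u'` is
`v ↦ ∑ⱼ -2 a_ij (y_j - y'_j) v_ij`. For `y ≠ y'` some `y_j - y'_j` is nonzero, and then this map
is onto `ℝ^m` because row `i` only involves the variables `v_i·`. A linear map whose composite with
`u - u'` is onto has range complementing the diagonal (the kernel of `u - u'`).
-/

theorem LinearMap.range_sup_ker_eq_top_of_surjective_comp {R M N P : Type*} [Ring R]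
    [AddCommGroup M] [AddCommGroup N] [AddCommGroup P] [Module R M] [Module R N] [Module R P]
    (L : M →ₗ[R] N) (g : N →ₗ[R] P) (h : Function.Surjective (g ∘ₗ L)) :
    LinearMap.range L ⊔ LinearMap.ker g = ⊤ := by
  rw [← Submodule.comap_map_eq, ← LinearMap.range_comp, LinearMap.range_eq_top.2 h,
    Submodule.comap_top]

section RowDot

variable {ι κ : Type*} [Fintype κ]

noncomputable def rowDot (C : ι → κ → ℝ) : (ι → κ → ℝ) →L[ℝ] (ι → ℝ) :=
  ContinuousLinearMap.pi fun i =>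
    ∑ j, C i j • ((ContinuousLinearMap.proj j).comp
      (ContinuousLinearMap.proj (R := ℝ) (φ := fun _ : ι => κ → ℝ) i))

@[simp]
lemma rowDot_apply (C v : ι → κ → ℝ) (i : ι) : rowDot C v i = ∑ j, C i j * v i j := by
  simp [rowDot]

lemma rowDot_surjective (C : ι → κ → ℝ) (hC : ∀ i, ∃ j, C i j ≠ 0) :
    Function.Surjective (rowDot C) := by
  classical
  choose j hj using hC
  intro w
  refine ⟨fun i k => if k = j i then w i / C i (j i) else 0, funext fun i => ?_⟩
  simp [mul_ite, Finset.sum_ite_eq', mul_div_cancel₀ _ (hj i)]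

end RowDot

lemma hasFDerivAt_gdsq {m : ℕ} (A : Matrix (Fin m) (Fin m) ℝ) (y : Fin m → ℝ)
    (p : Fin m → Fin m → ℝ) :
    HasFDerivAt (gdsq · A y) (rowDot fun i j => -2 * A i j * (y j - p i j)) p := by
  refine hasFDerivAt_pi.2 fun i => HasFDerivAt.fun_sum fun j _ => ?_
  have hcoord := ((ContinuousLinearMap.proj (R := ℝ) j).comp
    (ContinuousLinearMap.proj (R := ℝ) (φ := fun _ : Fin m => Fin m → ℝ) i)).hasFDerivAt (x := p)
  have hsq : HasDerivAt (fun t : ℝ => A i j * (y j - t) ^ 2) (-2 * A i j * (y j - p i j))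
      (p i j) :=
    ((((hasDerivAt_id' (p i j)).const_sub (y j)).pow 2).const_mul (A i j)).congr_deriv (by ring)
  exact (hsq.comp_hasFDerivAt p hcoord :)

theorem stmt16_general {m : ℕ} {N : Type*} (f : N → (Fin m → ℝ))
    (hfinj : Function.Injective f)
    (A : Matrix (Fin m) (Fin m) ℝ) (hA : ∀ i j, A i j ≠ 0) :
    ∀ q q' : N, q ≠ q' → ∀ p : Fin m → Fin m → ℝ,
      LinearMap.range
          ((fderiv ℝ (fun p' : Fin m → Fin m → ℝ => (gdsq p' A (f q), gdsq p' A (f q'))) p :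
            (Fin m → Fin m → ℝ) →ₗ[ℝ] (Fin m → ℝ) × (Fin m → ℝ)))
        ⊔ LinearMap.ker
            (LinearMap.fst ℝ (Fin m → ℝ) (Fin m → ℝ) - LinearMap.snd ℝ (Fin m → ℝ) (Fin m → ℝ))
        = ⊤ := by
  intro q q' hqq' p
  obtain ⟨j, hj⟩ := Function.ne_iff.mp (hfinj.ne hqq')
  rw [((hasFDerivAt_gdsq A (f q) p).prodMk (hasFDerivAt_gdsq A (f q') p)).fderiv]
  apply LinearMap.range_sup_ker_eq_top_of_surjective_comp
  convert rowDot_surjective (fun i j => -2 * A i j * (f q j - f q' j))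
    fun i => ⟨j, by simp [hA i j, sub_ne_zero.2 hj]⟩ using 1
  ext v i
  simp only [LinearMap.comp_apply, ContinuousLinearMap.coe_coe, ContinuousLinearMap.prod_apply,
    LinearMap.sub_apply, LinearMap.fst_apply, LinearMap.snd_apply, Pi.sub_apply, rowDot_apply,
    ← Finset.sum_sub_distrib]
  exact Finset.sum_congr rfl fun k _ => by ring

/-- If `f : N → ℝ^m` is smooth and injective and `A` has all entries nonzero, then the map
`Γ(q, q', p) = (G_{(p,A)}(f q), G_{(p,A)}(f q'))` is transverse to the diagonal
`Δ ⊆ ℝ^{2m}`: for each fixed pair `q ≠ q'` and every `p`, the image of the derivative in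
the `p`-variables together with `T Δ` already spans all of `ℝ^m × ℝ^m`. -/
theorem stmt16 {n m : ℕ}
    {N : Type*} [TopologicalSpace N] [ChartedSpace (EuclideanSpace ℝ (Fin n)) N]
    [IsManifold (𝓡 n) (⊤ : ℕ∞) N]
    (f : N → (Fin m → ℝ)) (hf : ContMDiff (𝓡 n) 𝓘(ℝ, Fin m → ℝ) (⊤ : ℕ∞) f)
    (hfinj : Function.Injective f)
    (A : Matrix (Fin m) (Fin m) ℝ) (hA : ∀ i j, A i j ≠ 0) :
    ∀ q q' : N, q ≠ q' → ∀ p : Fin m → Fin m → ℝ,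
      LinearMap.range
          ((fderiv ℝ (fun p' : Fin m → Fin m → ℝ => (gdsq p' A (f q), gdsq p' A (f q'))) p :
            (Fin m → Fin m → ℝ) →ₗ[ℝ] (Fin m → ℝ) × (Fin m → ℝ)))
        ⊔ LinearMap.ker
            (LinearMap.fst ℝ (Fin m → ℝ) (Fin m → ℝ) - LinearMap.snd ℝ (Fin m → ℝ) (Fin m → ℝ))
        = ⊤ :=
  stmt16_general f hfinj A hA
end
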